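/- Let P be a finite-dimensional Poisson algebra, B a subideal of P (connected to P by a chain of subalgebras each an ideal in the next), and C an ideal of B with C ⊆ φ(P). If B/C is nilpotent, then B is nilpotent. -/

import Mathlib

/-!  Framework: dialgebras and Poisson algebras as bilinear structures on a module. -/

variable {F P : Type*} [Field F] [AddCommGroup P] [Module F P]

/-- A dialgebra: a vector space with two bilinear multiplications. -/
structure Dialgebra (F P : Type*) [Field F] [AddCommGroup P] [Module F P] where
  mul : P →ₗ[F] P →ₗ[F] P
  bracket : P →ₗ[F] P →ₗ[F] P

namespace Dialgebra

variable (D : Dialgebra F P)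

/-- Span of the set of products `a·b`, `a ∈ A`, `b ∈ B`. -/
def pmul (A B : Submodule F P) : Submodule F P :=
  Submodule.span F (Set.image2 (fun a b => D.mul a b) (A : Set P) (B : Set P))

/-- Span of the set of brackets `[a,b]`, `a ∈ A`, `b ∈ B`. -/
def pbra (A B : Submodule F P) : Submodule F P :=
  Submodule.span F (Set.image2 (fun a b => D.bracket a b) (A : Set P) (B : Set P))

/-- `A·B + [A,B]`. -/
def psq (A B : Submodule F P) : Submodule F P := D.pmul A B ⊔ D.pbra A B

/-- A subalgebra: a subspace closed under both products. -/
def IsSubalgebra (A : Submodule F P) : Prop := D.psq A A ≤ A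

/-- An ideal of the dialgebra. -/
def IsIdeal (A : Submodule F P) : Prop :=
  D.pmul A ⊤ ≤ A ∧ D.pmul ⊤ A ≤ A ∧ D.pbra A ⊤ ≤ A ∧ D.pbra ⊤ A ≤ A

/-- `A` is an ideal of the subalgebra `U`. -/
def IsIdealIn (A U : Submodule F P) : Prop :=
  A ≤ U ∧ D.pmul A U ≤ A ∧ D.pmul U A ≤ A ∧ D.pbra A U ≤ A ∧ D.pbra U A ≤ A

/-- Lower central series of `B`: `B^1 = B`, `B^{n+1} = B^n·B + [B^n,B]`. -/
def lcs (B : Submodule F P) : ℕ → Submodule F P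
  | 0 => B
  | n + 1 => D.psq (lcs B n) B

/-- `B` is nilpotent as a dialgebra. -/
def IsNilpotentSub (B : Submodule F P) : Prop := ∃ n, D.lcs B n = ⊥

/-- Derived series of `B`. -/
def ders (B : Submodule F P) : ℕ → Submodule F P
  | 0 => B
  | n + 1 => D.psq (ders B n) (ders B n)

/-- `B` is solvable as a dialgebra. -/
def IsSolvableSub (B : Submodule F P) : Prop := ∃ n, D.ders B n = ⊥

/-- Associative powers: `apow B n = B_A^{n+1}`, i.e. `apow B 0 = B_A^1 = B`. -/
def apow (B : Submodule F P) : ℕ → Submodule F P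
  | 0 => B
  | n + 1 => D.pmul (apow B n) B

/-- Lie powers: `lpow B n = B_L^{n+1}`. -/
def lpow (B : Submodule F P) : ℕ → Submodule F P
  | 0 => B
  | n + 1 => D.pbra (lpow B n) B

/-- Associative nilpotency of `B`. -/
def AssocNilpotent (B : Submodule F P) : Prop := ∃ n, D.apow B n = ⊥

/-- Lie nilpotency of `B`. -/
def LieNilpotent (B : Submodule F P) : Prop := ∃ n, D.lpow B n = ⊥

/-- `mulPows B X n = X·B_A^n` (with the convention that it is `X` for `n = 0`). -/
def mulPows (B X : Submodule F P) : ℕ → Submodule F P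
  | 0 => X
  | n + 1 => D.pmul (mulPows B X n) B

/-- `M` is a maximal (proper) subalgebra of the subalgebra `U`. -/
def IsMaximalSubalgebraIn (U M : Submodule F P) : Prop :=
  D.IsSubalgebra M ∧ M < U ∧ ∀ K, D.IsSubalgebra K → M ≤ K → K ≤ U → K = M ∨ K = U

/-- Frattini subalgebra of the subalgebra `U`: intersection of its maximal subalgebras. -/
def frattiniIn (U : Submodule F P) : Submodule F P :=
  U ⊓ sInf {M | D.IsMaximalSubalgebraIn U M}

/-- Frattini ideal of the subalgebra `U`: largest ideal of `U` inside `frattiniIn U`. -/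
def phiIn (U : Submodule F P) : Submodule F P :=
  sSup {I | D.IsIdealIn I U ∧ I ≤ D.frattiniIn U}

/-- Frattini subalgebra of the dialgebra. -/
def frattini : Submodule F P := D.frattiniIn ⊤

/-- Frattini ideal of the dialgebra. -/
def phi : Submodule F P := sSup {I | D.IsIdeal I ∧ I ≤ D.frattini}

/-- Minimal ideal. -/
def IsMinimalIdeal (A : Submodule F P) : Prop :=
  D.IsIdeal A ∧ A ≠ ⊥ ∧ ∀ I, D.IsIdeal I → I ≤ A → I = ⊥ ∨ I = A

/-- Zero (trivial-multiplication) subspace. -/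
def IsZeroAlg (A : Submodule F P) : Prop := D.pmul A A = ⊥ ∧ D.pbra A A = ⊥

/-- Zero socle: sum of the minimal zero ideals. -/
def zsoc : Submodule F P := sSup {A | D.IsMinimalIdeal A ∧ D.IsZeroAlg A}

/-- Socle: sum of the minimal ideals. -/
def soc : Submodule F P := sSup {A | D.IsMinimalIdeal A}

/-- Annihilator of `B` in the algebra. -/
def annih (B : Submodule F P) : Submodule F P where
  carrier := {x | ∀ b ∈ B, D.mul x b = 0 ∧ D.bracket x b = 0}
  add_mem' := by
    intro x y hx hy b hb
    have h1 := hx b hb; have h2 := hy b hb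
    constructor <;> simp [map_add, LinearMap.add_apply, h1.1, h1.2, h2.1, h2.2]
  zero_mem' := by intro b hb; simp
  smul_mem' := by
    intro c x hx b hb
    have h := hx b hb
    constructor <;> simp [map_smul, LinearMap.smul_apply, h.1, h.2]

/-- `R` is the solvable radical: the largest solvable ideal. -/
def IsRadical (R : Submodule F P) : Prop :=
  D.IsIdeal R ∧ D.IsSolvableSub R ∧ ∀ I, D.IsIdeal I → D.IsSolvableSub I → I ≤ R

/-- `N` is the nilradical: the largest nilpotent ideal. -/
def IsNilradical (N : Submodule F P) : Prop :=
  D.IsIdeal N ∧ D.IsNilpotentSub N ∧ ∀ I, D.IsIdeal I → D.IsNilpotentSub I → I ≤ N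

end Dialgebra

/-- A Poisson algebra: commutative associative product and Lie bracket linked by the Leibniz rule. -/
structure PoissonAlgebra (F P : Type*) [Field F] [AddCommGroup P] [Module F P]
    extends Dialgebra F P where
  mul_comm : ∀ x y, mul x y = mul y x
  mul_assoc : ∀ x y z, mul (mul x y) z = mul x (mul y z)
  lie_self : ∀ x, bracket x x = 0
  leibniz_lie : ∀ x y z, bracket x (bracket y z) = bracket (bracket x y) z + bracket y (bracket x z)
  leibniz : ∀ x y z, bracket (mul x y) z = mul (bracket x z) y + mul x (bracket y z)

/-! For `b ∈ B` let `T` be right multiplication by `b`, for either of the two products. Walking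
down the subideal chain and then along the lower central series of `B`, `T` carries `P` into `B`
in `r` steps and `Bᵏ` into `Bᵏ⁺¹`, so some power of `T` has range inside `Bⁿ ⊆ C ⊆ φ(P)`. By
Fitting's lemma `P = ker Tᵐ ⊕ range Tᵐ` for large `m`, and `ker Tᵐ` is a subalgebra (for the
bracket `T` is a derivation; for the product the generalized kernel even absorbs both products).
So `ker Tᵐ` supplements `φ(P)`, hence is all of `P`: every such `T` is nilpotent.

Engel's theorem, applied to the right multiplications by elements of `B` for each product
separately, makes `B` nilpotent as an associative and as a Lie algebra. By the Leibniz rule an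
element of `Bᵐ` is a sum of products of Lie powers of `B`; such a product vanishes once it has
many factors or a large total Lie weight, and for large `m` one of the two must happen. -/

open Submodule Module

theorem pow_add_apply_eq_zero_of_derivation (f : P →ₗ[F] P →ₗ[F] P) {T : Module.End F P}
    (hT : ∀ u v, T (f u v) = f (T u) v + f u (T v)) {a b : ℕ} {u v : P}
    (hu : (T ^ a) u = 0) (hv : (T ^ b) v = 0) : (T ^ (a + b)) (f u v) = 0 := by
  obtain ⟨n, hn⟩ : ∃ n, a + b = n := ⟨_, rfl⟩
  rw [hn]
  induction n generalizing a b u v with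
  | zero =>
    obtain rfl : u = 0 := by simpa [show a = 0 by omega] using hu
    simp
  | succ n ih =>
    rcases a with _ | a
    · obtain rfl : u = 0 := by simpa using hu
      simp
    rcases b with _ | b
    · obtain rfl : v = 0 := by simpa using hv
      simp
    rw [pow_succ, Module.End.mul_apply, hT, map_add,
      ih (a := a) (b := b + 1) (by rwa [pow_succ] at hu) hv (by omega),
      ih (a := a + 1) (b := b) hu (by rwa [pow_succ] at hv) (by omega), add_zero]

theorem map₂_ker_pow_finrank_le_of_derivation [FiniteDimensional F P] (f : P →ₗ[F] P →ₗ[F] P)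
    {T : Module.End F P} (hT : ∀ u v, T (f u v) = f (T u) v + f u (T v)) :
    map₂ f (LinearMap.ker (T ^ finrank F P)) (LinearMap.ker (T ^ finrank F P)) ≤
      LinearMap.ker (T ^ finrank F P) := by
  refine map₂_le.2 fun u hu v hv => ?_
  rw [← Module.End.ker_pow_eq_ker_pow_finrank_of_le (Nat.le_add_right _ (finrank F P))]
  exact pow_add_apply_eq_zero_of_derivation f hT hu hv

theorem map_pow_le_of_map_le {T : Module.End F P} {S : ℕ → Submodule F P} {m : ℕ}
    (h : ∀ i < m, (S (i + 1)).map T ≤ S i) : (S m).map (T ^ m) ≤ S 0 := by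
  induction m with
  | zero => rw [pow_zero, Module.End.one_eq_id, Submodule.map_id]
  | succ m ih =>
    rw [pow_succ, Module.End.mul_eq_comp, Submodule.map_comp]
    exact (Submodule.map_mono (h m (Nat.lt_succ_self m))).trans (ih fun i hi => h i (by omega))

theorem map_flip_le_map₂ (f : P →ₗ[F] P →ₗ[F] P) (X : Submodule F P) {Y : Submodule F P} {b : P}
    (hb : b ∈ Y) : X.map (f.flip b) ≤ map₂ f X Y :=
  Submodule.map_le_iff_le_comap.2 fun _ hx => apply_mem_map₂ f hx hb

section Engel

attribute [local instance] LieRing.ofAssociativeRing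

/-- Engel's theorem for the Lie algebra of right multiplications `f.flip b`, `b ∈ B`. -/
theorem exists_eq_bot_of_isNilpotent_flip [FiniteDimensional F P] (f : P →ₗ[F] P →ₗ[F] P)
    (B : Submodule F P)
    (hlie : ∀ x ∈ B, ∀ y ∈ B, ∃ z ∈ B, f.flip x * f.flip y - f.flip y * f.flip x = f.flip z)
    (hnil : ∀ b ∈ B, IsNilpotent (f.flip b)) (S : ℕ → Submodule F P)
    (hS : ∀ i, S (i + 1) ≤ map₂ f (S i) B) : ∃ k, S k = ⊥ := by
  let K : LieSubalgebra F (Module.End F P) :=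
    { B.map f.flip with
      lie_mem' := by
        rintro _ _ ⟨x, hx, rfl⟩ ⟨y, hy, rfl⟩
        obtain ⟨z, hz, h⟩ := hlie x hx y hy
        exact ⟨z, hz, h.symm⟩ }
  have hK : LieModule.IsNilpotent K P := by
    refine (LieModule.isNilpotent_iff_forall' (R := F)).2 ?_
    rintro ⟨_, x, hx, rfl⟩
    exact hnil x hx
  obtain ⟨k, hk⟩ := (LieModule.isNilpotent_iff F K P).1 hK
  refine ⟨k, le_bot_iff.1 ?_⟩
  suffices ∀ i, S i ≤ (LieModule.lowerCentralSeries F K P i : Submodule F P) by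
    simpa [hk] using this k
  intro i
  induction i with
  | zero => simp
  | succ i ih =>
    refine (hS i).trans (map₂_le.2 fun a ha b hb => ?_)
    rw [LieSubmodule.mem_toSubmodule, LieModule.lowerCentralSeries_succ]
    exact LieSubmodule.lie_mem_lie (x := (⟨f.flip b, b, hb, rfl⟩ : K)) (LieSubmodule.mem_top _)
      (ih ha)

end Engel

namespace Dialgebra

variable (D : Dialgebra F P)

theorem pmul_eq_map₂ (A B : Submodule F P) : D.pmul A B = map₂ D.mul A B :=
  (map₂_eq_span_image2 _ _ _).symm

theorem pbra_eq_map₂ (A B : Submodule F P) : D.pbra A B = map₂ D.bracket A B :=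
  (map₂_eq_span_image2 _ _ _).symm

theorem isSubalgebra_iff (A : Submodule F P) :
    D.IsSubalgebra A ↔ map₂ D.mul A A ≤ A ∧ map₂ D.bracket A A ≤ A := by
  rw [IsSubalgebra, psq, pmul_eq_map₂, pbra_eq_map₂, sup_le_iff]

theorem IsIdealIn.map₂_mul_le {D : Dialgebra F P} {A U : Submodule F P} (h : D.IsIdealIn A U) :
    map₂ D.mul U A ≤ A :=
  (D.pmul_eq_map₂ U A) ▸ h.2.2.1

theorem IsIdealIn.map₂_bracket_le {D : Dialgebra F P} {A U : Submodule F P}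
    (h : D.IsIdealIn A U) : map₂ D.bracket U A ≤ A :=
  (D.pbra_eq_map₂ U A) ▸ h.2.2.2.2

theorem lcs_succ (B : Submodule F P) (n : ℕ) :
    D.lcs B (n + 1) = map₂ D.mul (D.lcs B n) B ⊔ map₂ D.bracket (D.lcs B n) B := by
  rw [lcs, psq, pmul_eq_map₂, pbra_eq_map₂]

theorem apow_succ (B : Submodule F P) (n : ℕ) :
    D.apow B (n + 1) = map₂ D.mul (D.apow B n) B :=
  D.pmul_eq_map₂ _ _

theorem lpow_succ (B : Submodule F P) (n : ℕ) :
    D.lpow B (n + 1) = map₂ D.bracket (D.lpow B n) B :=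
  D.pbra_eq_map₂ _ _

theorem phi_le_of_isMaximalSubalgebraIn_top {M : Submodule F P}
    (hM : D.IsMaximalSubalgebraIn ⊤ M) : D.phi ≤ M :=
  sSup_le fun _ hI => hI.2.trans (inf_le_right.trans (sInf_le hM))

theorem exists_isMaximalSubalgebraIn_top_ge [FiniteDimensional F P] {K : Submodule F P}
    (hK : D.IsSubalgebra K) (hne : K ≠ ⊤) : ∃ M ≥ K, D.IsMaximalSubalgebraIn ⊤ M := by
  obtain ⟨M, hKM, ⟨hM, hMne⟩, hmax⟩ :=
    exists_maximal_ge_of_wellFoundedGT (fun M => D.IsSubalgebra M ∧ M ≠ ⊤) K ⟨hK, hne⟩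
  refine ⟨M, hKM, hM, lt_top_iff_ne_top.2 hMne, fun L hL hML _ => ?_⟩
  by_cases hLtop : L = ⊤
  · exact Or.inr hLtop
  · exact Or.inl (le_antisymm (hmax ⟨hL, hLtop⟩ hML) hML)

theorem eq_top_of_sup_phi_eq_top [FiniteDimensional F P] {K : Submodule F P}
    (hK : D.IsSubalgebra K) (h : K ⊔ D.phi = ⊤) : K = ⊤ := by
  by_contra hne
  obtain ⟨M, hKM, hM⟩ := D.exists_isMaximalSubalgebraIn_top_ge hK hne
  exact hM.2.1.ne (top_unique (h ▸ sup_le hKM (D.phi_le_of_isMaximalSubalgebraIn_top hM)))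

theorem isNilpotent_of_range_pow_le_phi [FiniteDimensional F P] {T : Module.End F P} {N : ℕ}
    (hrange : LinearMap.range (T ^ N) ≤ D.phi)
    (hker : D.IsSubalgebra (LinearMap.ker (T ^ finrank F P))) : IsNilpotent T := by
  obtain ⟨m, hcompl, hm⟩ := (T.eventually_isCompl_ker_pow_range_pow.and
    (Filter.eventually_ge_atTop (N + finrank F P))).exists
  have hkerm : LinearMap.ker (T ^ m) = LinearMap.ker (T ^ finrank F P) :=
    Module.End.ker_pow_eq_ker_pow_finrank_of_le (by omega)
  have hrangem : LinearMap.range (T ^ m) ≤ D.phi := by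
    rw [← Nat.add_sub_cancel' (show N ≤ m by omega), pow_add, Module.End.mul_eq_comp]
    exact (LinearMap.range_comp_le_range _ _).trans hrange
  have htop : LinearMap.ker (T ^ m) = ⊤ := by
    refine D.eq_top_of_sup_phi_eq_top (hkerm ▸ hker) (top_unique ?_)
    exact hcompl.codisjoint.eq_top.ge.trans (sup_le_sup_left hrangem _)
  exact ⟨m, LinearMap.ker_eq_top.1 htop⟩

theorem range_pow_le_lcs {B : Submodule F P} {c : ℕ → Submodule F P} {r : ℕ} (hc0 : c 0 = B)
    (hcr : c r = ⊤) {T : Module.End F P} (hc : ∀ i < r, (c (i + 1)).map T ≤ c i)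
    (hlcs : ∀ k, (D.lcs B k).map T ≤ D.lcs B (k + 1)) (n : ℕ) :
    LinearMap.range (T ^ (n + r)) ≤ D.lcs B n := by
  have hr := map_pow_le_of_map_le hc
  rw [hcr, hc0, ← LinearMap.range_eq_map] at hr
  have hn := map_pow_le_of_map_le (T := T) (m := n) (S := fun i => D.lcs B (n - i))
    fun i hi => by rw [show n - i = n - (i + 1) + 1 by omega]; exact hlcs _
  simp only [Nat.sub_self, Nat.sub_zero] at hn
  rw [pow_add, Module.End.mul_eq_comp, LinearMap.range_comp]
  exact (Submodule.map_mono hr).trans hn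

theorem isNilpotent_flip_of_subideal [FiniteDimensional F P] (f : P →ₗ[F] P →ₗ[F] P)
    {B : Submodule F P} {c : ℕ → Submodule F P} {r n : ℕ} (hc0 : c 0 = B) (hcr : c r = ⊤)
    (hBc : ∀ i < r, B ≤ c i) (hfc : ∀ i < r, map₂ f (c (i + 1)) (c i) ≤ c i)
    (hflcs : ∀ k, map₂ f (D.lcs B k) B ≤ D.lcs B (k + 1)) (hphi : D.lcs B n ≤ D.phi)
    {b : P} (hb : b ∈ B) (hker : D.IsSubalgebra (LinearMap.ker (f.flip b ^ finrank F P))) :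
    IsNilpotent (f.flip b) :=
  D.isNilpotent_of_range_pow_le_phi
    ((D.range_pow_le_lcs hc0 hcr
      (fun i hi => (map_flip_le_map₂ f _ (hBc i hi hb)).trans (hfc i hi))
      (fun k => (map_flip_le_map₂ f _ hb).trans (hflcs k)) n).trans hphi) hker
theorem lpow_le_self {B : Submodule F P} (hB : D.IsSubalgebra B) (n : ℕ) : D.lpow B n ≤ B := by
  induction n with
  | zero => exact le_rfl
  | succ n ih =>
    exact (D.lpow_succ B n).trans_le
      ((map₂_le_map₂_left ih).trans ((D.isSubalgebra_iff B).1 hB).2)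

theorem apow_eq_bot_of_le {B : Submodule F P} {q n : ℕ} (hq : D.apow B q = ⊥) (hn : q ≤ n) :
    D.apow B n = ⊥ := by
  induction n, hn using Nat.le_induction with
  | base => exact hq
  | succ n _ ih => rw [apow_succ, ih, map₂_bot_left]

theorem lpow_eq_bot_of_le {B : Submodule F P} {l n : ℕ} (hl : D.lpow B l = ⊥) (hn : l ≤ n) :
    D.lpow B n = ⊥ := by
  induction n, hn using Nat.le_induction with
  | base => exact hl
  | succ n _ ih => rw [lpow_succ, ih, map₂_bot_left]

/-- `D.prodLpow B a b` is spanned by the products `(⋯(x₀ x₁)⋯) xₐ` with `xⱼ ∈ D.lpow B iⱼ` and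
`i₀ + ⋯ + iₐ = b`. -/
def prodLpow (B : Submodule F P) : ℕ → ℕ → Submodule F P
  | 0, b => D.lpow B b
  | a + 1, b => ⨆ i ≤ b, map₂ D.mul (prodLpow B a i) (D.lpow B (b - i))

theorem map₂_mul_prodLpow_le (B : Submodule F P) (a b : ℕ) :
    map₂ D.mul (D.prodLpow B a b) B ≤ D.prodLpow B (a + 1) b := by
  rw [prodLpow]
  exact le_iSup₂_of_le b le_rfl (by rw [Nat.sub_self]; exact le_rfl)

theorem prodLpow_le_apow {B : Submodule F P} (hB : D.IsSubalgebra B) (a b : ℕ) :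
    D.prodLpow B a b ≤ D.apow B a := by
  induction a generalizing b with
  | zero => exact D.lpow_le_self hB b
  | succ a ih =>
    rw [prodLpow, apow_succ]
    exact iSup₂_le fun i _ => map₂_le_map₂ (ih i) (D.lpow_le_self hB _)

theorem prodLpow_eq_bot {B : Submodule F P} {l : ℕ} (hl : D.lpow B l = ⊥) {a b : ℕ}
    (hab : (a + 1) * l ≤ b) : D.prodLpow B a b = ⊥ := by
  induction a generalizing b with
  | zero => exact D.lpow_eq_bot_of_le hl (by omega)
  | succ a ih =>
    rw [prodLpow, eq_bot_iff]
    refine iSup₂_le fun i _ => ?_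
    by_cases hi : l ≤ b - i
    · rw [D.lpow_eq_bot_of_le hl hi, map₂_bot_right]
    · rw [ih (show (a + 1) * l ≤ i by rw [add_one_mul] at hab; omega), map₂_bot_left]

end Dialgebra

namespace PoissonAlgebra

variable (Q : PoissonAlgebra F P)

theorem bracket_skew (x y : P) : -Q.bracket y x = Q.bracket x y := by
  have h := Q.lie_self (x + y)
  simp only [map_add, LinearMap.add_apply, Q.lie_self, zero_add, add_zero] at h
  exact neg_eq_of_add_eq_zero_right h

theorem bracket_mul (u v w : P) :
    Q.bracket u (Q.mul v w) = Q.mul (Q.bracket u v) w + Q.mul v (Q.bracket u w) := by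
  rw [← Q.bracket_skew, Q.leibniz, ← Q.bracket_skew, ← Q.bracket_skew (x := w)]
  simp only [map_neg, LinearMap.neg_apply, neg_add, neg_neg, add_comm]

theorem bracket_bracket_left (u v w : P) :
    Q.bracket (Q.bracket u v) w = Q.bracket (Q.bracket u w) v + Q.bracket u (Q.bracket v w) := by
  rw [Q.leibniz_lie u v w, ← Q.bracket_skew (x := Q.bracket u w), add_comm]
  abel

theorem mul_flip_pow_mul (b : P) (n : ℕ) (x v : P) :
    ((Q.mul.flip b) ^ n) (Q.mul x v) = Q.mul x (((Q.mul.flip b) ^ n) v) := by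
  induction n with
  | zero => rfl
  | succ n ih => rw [pow_succ', Module.End.mul_apply, ih, LinearMap.flip_apply, Q.mul_assoc]; rfl

theorem bracket_mem_ker_mul_flip_pow_succ (b u : P) {n : ℕ} {v : P}
    (hv : v ∈ LinearMap.ker ((Q.mul.flip b) ^ n)) :
    Q.bracket u v ∈ LinearMap.ker ((Q.mul.flip b) ^ (n + 1)) := by
  induction n generalizing v with
  | zero => simp_all
  | succ n ih =>
    have hvb : Q.mul v b ∈ LinearMap.ker ((Q.mul.flip b) ^ n) := by
      rwa [LinearMap.mem_ker, pow_succ, Module.End.mul_apply] at hv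
    have hsplit : Q.mul (Q.bracket u v) b =
        Q.bracket u (Q.mul v b) - Q.mul (Q.bracket u b) v := by
      rw [Q.bracket_mul, Q.mul_comm v]
      abel
    rw [LinearMap.mem_ker, pow_succ, Module.End.mul_apply, LinearMap.flip_apply, hsplit,
      map_sub, ih hvb, mul_flip_pow_mul, hv, map_zero, sub_zero]

theorem isSubalgebra_ker_mul_flip_pow_finrank [FiniteDimensional F P] (b : P) :
    Q.IsSubalgebra (LinearMap.ker ((Q.mul.flip b) ^ finrank F P)) := by
  refine (Q.isSubalgebra_iff _).2 ⟨map₂_le.2 fun u _ v hv => ?_, map₂_le.2 fun u _ v hv => ?_⟩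
  · rw [LinearMap.mem_ker, mul_flip_pow_mul, LinearMap.mem_ker.1 hv, map_zero]
  · rw [← Module.End.ker_pow_eq_ker_pow_finrank_of_le (Nat.le_succ (finrank F P))]
    exact Q.bracket_mem_ker_mul_flip_pow_succ b u hv

theorem isSubalgebra_ker_bracket_flip_pow_finrank [FiniteDimensional F P] (b : P) :
    Q.IsSubalgebra (LinearMap.ker ((Q.bracket.flip b) ^ finrank F P)) :=
  (Q.isSubalgebra_iff _).2
    ⟨map₂_ker_pow_finrank_le_of_derivation _ fun u v => Q.leibniz u v b,
      map₂_ker_pow_finrank_le_of_derivation _ fun u v => Q.bracket_bracket_left u v b⟩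

theorem assocNilpotent_of_isNilpotent_mul_flip [FiniteDimensional F P] {B : Submodule F P}
    (hnil : ∀ b ∈ B, IsNilpotent (Q.mul.flip b)) : Q.AssocNilpotent B := by
  refine exists_eq_bot_of_isNilpotent_flip Q.mul B (fun x _ y _ => ⟨0, B.zero_mem, ?_⟩) hnil
    (Q.apow B) fun i => (Q.apow_succ B i).le
  ext u
  simp only [LinearMap.sub_apply, Module.End.mul_apply, LinearMap.flip_apply, map_zero,
    LinearMap.zero_apply, Q.mul_assoc, Q.mul_comm y, sub_self]

theorem lieNilpotent_of_isNilpotent_bracket_flip [FiniteDimensional F P] {B : Submodule F P}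
    (hB : Q.IsSubalgebra B) (hnil : ∀ b ∈ B, IsNilpotent (Q.bracket.flip b)) :
    Q.LieNilpotent B := by
  refine exists_eq_bot_of_isNilpotent_flip Q.bracket B
    (fun x hx y hy => ⟨Q.bracket y x, ((Q.isSubalgebra_iff B).1 hB).2 (apply_mem_map₂ _ hy hx), ?_⟩)
    hnil (Q.lpow B) fun i => (Q.lpow_succ B i).le
  ext u
  simp only [LinearMap.sub_apply, Module.End.mul_apply, LinearMap.flip_apply,
    Q.bracket_bracket_left u y x, add_sub_cancel_left]

theorem map₂_bracket_map₂_mul_le (U V W : Submodule F P) :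
    map₂ Q.bracket (map₂ Q.mul U V) W ≤
      map₂ Q.mul (map₂ Q.bracket U W) V ⊔ map₂ Q.mul U (map₂ Q.bracket V W) := by
  refine map₂_le.2 fun x hx w hw => ?_
  suffices map₂ Q.mul U V ≤ (map₂ Q.mul (map₂ Q.bracket U W) V ⊔
      map₂ Q.mul U (map₂ Q.bracket V W)).comap (Q.bracket.flip w) from this hx
  refine map₂_le.2 fun u hu v hv => ?_
  rw [mem_comap, LinearMap.flip_apply, Q.leibniz]
  exact add_mem (mem_sup_left (apply_mem_map₂ _ (apply_mem_map₂ _ hu hw) hv))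
    (mem_sup_right (apply_mem_map₂ _ hu (apply_mem_map₂ _ hv hw)))

theorem map₂_bracket_prodLpow_le (B : Submodule F P) (a b : ℕ) :
    map₂ Q.bracket (Q.prodLpow B a b) B ≤ Q.prodLpow B a (b + 1) := by
  induction a generalizing b with
  | zero => exact (Q.lpow_succ B b).ge
  | succ a ih =>
    simp only [Dialgebra.prodLpow, map₂_iSup_left]
    refine iSup₂_le fun i hi => (Q.map₂_bracket_map₂_mul_le _ _ _).trans (sup_le ?_ ?_)
    · refine le_iSup₂_of_le (i + 1) (by omega) ?_
      rw [show b + 1 - (i + 1) = b - i by omega]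
      exact map₂_le_map₂_left (ih i)
    · refine le_iSup₂_of_le i (by omega) ?_
      rw [show b + 1 - i = b - i + 1 by omega, Dialgebra.lpow_succ]

theorem lcs_le_iSup_prodLpow (B : Submodule F P) (m : ℕ) :
    Q.lcs B m ≤ ⨆ a ≤ m, Q.prodLpow B a (m - a) := by
  induction m with
  | zero => exact le_iSup₂_of_le 0 le_rfl le_rfl
  | succ m ih =>
    rw [Dialgebra.lcs_succ]
    refine sup_le ((map₂_le_map₂_left ih).trans ?_) ((map₂_le_map₂_left ih).trans ?_) <;>
      simp only [map₂_iSup_left] <;> refine iSup₂_le fun a ha => ?_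
    · refine (Q.map₂_mul_prodLpow_le B a (m - a)).trans (le_iSup₂_of_le (a + 1) (by omega) ?_)
      rw [show m + 1 - (a + 1) = m - a by omega]
    · refine (Q.map₂_bracket_prodLpow_le B a (m - a)).trans (le_iSup₂_of_le a (by omega) ?_)
      rw [show m + 1 - a = m - a + 1 by omega]

theorem isNilpotentSub_of_assocNilpotent_of_lieNilpotent {B : Submodule F P}
    (hB : Q.IsSubalgebra B) (hA : Q.AssocNilpotent B) (hL : Q.LieNilpotent B) :
    Q.IsNilpotentSub B := by
  obtain ⟨q, hq⟩ := hA
  obtain ⟨l, hl⟩ := hL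
  refine ⟨q + (q + 1) * l, eq_bot_iff.2 ((Q.lcs_le_iSup_prodLpow B _).trans
    (iSup₂_le fun a _ => ?_))⟩
  by_cases haq : q ≤ a
  · exact (Q.prodLpow_le_apow hB a _).trans (Q.apow_eq_bot_of_le hq haq).le
  · have : (a + 1) * l ≤ (q + 1) * l := Nat.mul_le_mul_right l (by omega)
    exact (Q.prodLpow_eq_bot hl (by omega)).le

end PoissonAlgebra

theorem nilpotent_of_quotient_nilpotent_general {F P : Type*} [Field F] [AddCommGroup P] [Module F P]
    [FiniteDimensional F P] (Q : PoissonAlgebra F P) (B C : Submodule F P)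
    (hsub : ∃ (r : ℕ) (c : ℕ → Submodule F P), c 0 = B ∧ c r = ⊤ ∧
      (∀ i ≤ r, Q.toDialgebra.IsSubalgebra (c i)) ∧
      (∀ i < r, Q.toDialgebra.IsIdealIn (c i) (c (i + 1))))
    (hCphi : C ≤ Q.toDialgebra.phi)
    (hquot : ∃ n, Q.toDialgebra.lcs B n ≤ C) :
    Q.toDialgebra.IsNilpotentSub B := by
  obtain ⟨r, c, hc0, hcr, hcsub, hcid⟩ := hsub
  obtain ⟨n, hn⟩ := hquot
  have hB : Q.IsSubalgebra B := hc0 ▸ hcsub 0 r.zero_le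
  have hBc : ∀ i ≤ r, B ≤ c i := by
    intro i
    induction i with
    | zero => exact fun _ => hc0.ge
    | succ i ih => exact fun hi => (ih (by omega)).trans (hcid i (by omega)).1
  have hmul : ∀ b ∈ B, IsNilpotent (Q.mul.flip b) := fun b hb =>
    Q.isNilpotent_flip_of_subideal Q.mul hc0 hcr (fun i hi => hBc i hi.le)
      (fun i hi => (hcid i hi).map₂_mul_le) (fun k => le_sup_left.trans (Q.lcs_succ B k).ge)
      (hn.trans hCphi) hb (Q.isSubalgebra_ker_mul_flip_pow_finrank b)
  have hbracket : ∀ b ∈ B, IsNilpotent (Q.bracket.flip b) := fun b hb =>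
    Q.isNilpotent_flip_of_subideal Q.bracket hc0 hcr (fun i hi => hBc i hi.le)
      (fun i hi => (hcid i hi).map₂_bracket_le) (fun k => le_sup_right.trans (Q.lcs_succ B k).ge)
      (hn.trans hCphi) hb (Q.isSubalgebra_ker_bracket_flip_pow_finrank b)
  exact Q.isNilpotentSub_of_assocNilpotent_of_lieNilpotent hB
    (Q.assocNilpotent_of_isNilpotent_mul_flip hmul)
    (Q.lieNilpotent_of_isNilpotent_bracket_flip hB hbracket)

/-- If `B` is a subideal of a Poisson algebra, `C` an ideal of `B` with `C ⊆ φ(P)`,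
and `B/C` is nilpotent, then `B` is nilpotent. -/
theorem nilpotent_of_quotient_nilpotent {F P : Type*} [Field F] [AddCommGroup P] [Module F P]
    [FiniteDimensional F P] (Q : PoissonAlgebra F P) (B C : Submodule F P)
    (hsub : ∃ (r : ℕ) (c : ℕ → Submodule F P), c 0 = B ∧ c r = ⊤ ∧
      (∀ i ≤ r, Q.toDialgebra.IsSubalgebra (c i)) ∧
      (∀ i < r, Q.toDialgebra.IsIdealIn (c i) (c (i + 1))))
    (hC : Q.toDialgebra.IsIdealIn C B) (hCphi : C ≤ Q.toDialgebra.phi)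
    (hquot : ∃ n, Q.toDialgebra.lcs B n ≤ C) :
    Q.toDialgebra.IsNilpotentSub B :=
  nilpotent_of_quotient_nilpotent_general Q B C hsub hCphi hquot
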